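/- arXiv:2310.04980 — 4 statements merged into one kernel-verified Lean document; each statement's English description precedes it below -/
import Mathlib

section
/- Let G be a group, H ≤ G a subgroup, and K ≤ [G, H] a subgroup of finite index in [G, H]. Assume: (1) K is normal in G; (2) H is generated by finitely many elements h₁, …, h_M together with a subgroup H' ≤ H such that [G, H'] ⊆ K. Then there exists a finite-index normal subgroup G' of G such that [G', H] ⊆ K. -/
/-!
Pass to `Q = G ⧸ K`. There the image of `⁅G, H⁆` is finite, so every element `x` of the image of
`H` has finitely many conjugates (`g x g⁻¹ = ⁅g, x⁆ x`) and hence a centralizer of finite index.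
The image of `H'` is central, so the image of `H` is centralized by the centralizer of the
finitely many images of the `hᵢ`, a subgroup of finite index; its normal core pulled back to `G`
is the required `G'`.
-/

open scoped commutatorElement

namespace Subgroup

variable {G : Type*} [Group G]

theorem finite_map_mk'_of_finiteIndex_subgroupOf {K S : Subgroup G} [K.Normal]
    (h : (K.subgroupOf S).FiniteIndex) : (S.map (QuotientGroup.mk' K) : Set (G ⧸ K)).Finite := by
  have hker : K.subgroupOf S = ((QuotientGroup.mk' K).comp S.subtype).ker := by
    rw [← MonoidHom.comap_ker, QuotientGroup.ker_mk']; rfl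
  have := h.index_ne_zero
  rw [hker, index_ker, MonoidHom.range_comp, range_subtype] at this
  have := Nat.finite_of_card_ne_zero this
  exact Set.toFinite _

theorem finite_orbit_conjAct_of_mem {L : Subgroup G}
    (hL : ((⁅(⊤ : Subgroup G), L⁆ : Subgroup G) : Set G).Finite) {x : G} (hx : x ∈ L) :
    (MulAction.orbit (ConjAct G) x).Finite := by
  refine (hL.image (· * x)).subset ?_
  rintro _ ⟨g, rfl⟩
  refine ⟨⁅ConjAct.ofConjAct g, x⁆, commutator_mem_commutator (mem_top _) hx, ?_⟩
  simp [ConjAct.smul_def, commutatorElement_def]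

theorem finiteIndex_centralizer_singleton_of_finite_orbit {x : G}
    (hx : (MulAction.orbit (ConjAct G) x).Finite) : (centralizer {x}).FiniteIndex := by
  have : centralizer {x} =
      (MulAction.stabilizer (ConjAct G) x).comap (ConjAct.toConjAct (G := G)).toMonoidHom := by
    ext g
    simp [mem_centralizer_singleton_iff, ConjAct.smul_def, eq_mul_inv_iff_mul_eq, eq_comm]
  rw [this, finiteIndex_iff,
    index_comap_of_surjective _ (MulEquiv.surjective _), MulAction.index_stabilizer]
  exact ((Set.ncard_pos hx).mpr ⟨x, MulAction.mem_orbit_self x⟩).ne'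

theorem finiteIndex_centralizer_of_finite {s : Set G} (hs : s.Finite)
    (h : ∀ x ∈ s, (centralizer {x}).FiniteIndex) : (centralizer s).FiniteIndex := by
  have := hs.to_subtype
  rw [centralizer_eq_iInf, iInf_subtype']
  exact finiteIndex_iInf fun x => h x x.2

theorem exists_finiteIndex_normal_commutator_eq_bot {L L' : Subgroup G} {s : Set G}
    (hs : s.Finite) (hL : L = closure s ⊔ L') (hL' : ⁅(⊤ : Subgroup G), L'⁆ = ⊥)
    (hfin : ((⁅(⊤ : Subgroup G), L⁆ : Subgroup G) : Set G).Finite) :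
    ∃ N : Subgroup G, N.Normal ∧ N.FiniteIndex ∧ ⁅N, L⁆ = ⊥ := by
  have hsL : s ⊆ L := hL ▸ subset_closure.trans (le_sup_left (b := L'))
  have : (centralizer s).FiniteIndex := finiteIndex_centralizer_of_finite hs fun x hx =>
    finiteIndex_centralizer_singleton_of_finite_orbit (finite_orbit_conjAct_of_mem hfin (hsL hx))
  have hL'_central : L' ≤ centralizer (centralizer s) :=
    (le_centralizer_iff.mp (commutator_eq_bot_iff_le_centralizer.mp hL')).trans
      (centralizer_le fun _ _ => mem_top _)
  have hL_central : L ≤ centralizer (centralizer s) :=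
    hL ▸ sup_le (closure_le_centralizer_centralizer s) hL'_central
  refine ⟨(centralizer s).normalCore, normalCore_normal _, inferInstance, ?_⟩
  exact commutator_eq_bot_iff_le_centralizer.mpr
    ((normalCore_le _).trans (le_centralizer_iff.mp hL_central))

end Subgroup

theorem exists_finiteIndex_normal_commutator_le_general {G : Type*} [Group G]
    (H H' K : Subgroup G) (M : ℕ) (h : Fin M → G)
    (hfin : (K.subgroupOf ⁅(⊤ : Subgroup G), H⁆).FiniteIndex)
    (hnorm : K.Normal)
    (hgen : H = Subgroup.closure (Set.range h) ⊔ H')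
    (hH' : ⁅(⊤ : Subgroup G), H'⁆ ≤ K) :
    ∃ G' : Subgroup G, G'.Normal ∧ G'.FiniteIndex ∧ ⁅G', H⁆ ≤ K := by
  set φ := QuotientGroup.mk' K
  have hφ : Function.Surjective φ := QuotientGroup.mk'_surjective K
  have hker : φ.ker = K := QuotientGroup.ker_mk' K
  have map_commutator_top (L : Subgroup G) :
      ⁅(⊤ : Subgroup G), L⁆.map φ = ⁅(⊤ : Subgroup (G ⧸ K)), L.map φ⁆ := by
    rw [Subgroup.map_commutator, Subgroup.map_top_of_surjective φ hφ]
  obtain ⟨N, hN, hNfin, hNH⟩ :=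
    Subgroup.exists_finiteIndex_normal_commutator_eq_bot (L := H.map φ) (L' := H'.map φ)
      (Set.finite_range (φ ∘ h))
      (by rw [hgen, Subgroup.map_sup, MonoidHom.map_closure, Set.range_comp])
      (by rw [← map_commutator_top, Subgroup.map_eq_bot_iff, hker]; exact hH')
      (map_commutator_top H ▸ Subgroup.finite_map_mk'_of_finiteIndex_subgroupOf hfin)
  refine ⟨N.comap φ, hN.comap φ,
    ⟨by rw [Subgroup.index_comap_of_surjective _ hφ]; exact hNfin.index_ne_zero⟩, ?_⟩
  have hmap : ⁅N.comap φ, H⁆.map φ = ⊥ := by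
    rw [Subgroup.map_commutator, eq_bot_iff, ← hNH]
    exact Subgroup.commutator_mono (Subgroup.map_comap_le φ N) le_rfl
  exact ((Subgroup.map_eq_bot_iff _).mp hmap).trans hker.le

/-- Let `K ≤ ⁅G, H⁆` be a finite-index subgroup of `⁅G, H⁆`, normal in `G`.  Assume `H`
is generated by finitely many elements `h₁, …, h_M` together with a subgroup `H'` with
`⁅G, H'⁆ ⊆ K`.  Then there is a finite-index normal subgroup `G'` of `G` with `⁅G', H⁆ ⊆ K`. -/
theorem exists_finiteIndex_normal_commutator_le {G : Type*} [Group G]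
    (H H' K : Subgroup G) (M : ℕ) (h : Fin M → G)
    (hK : K ≤ ⁅(⊤ : Subgroup G), H⁆)
    (hfin : (K.subgroupOf ⁅(⊤ : Subgroup G), H⁆).FiniteIndex)
    (hnorm : K.Normal)
    (hH'le : H' ≤ H)
    (hgen : H = Subgroup.closure (Set.range h) ⊔ H')
    (hH' : ⁅(⊤ : Subgroup G), H'⁆ ≤ K) :
    ∃ G' : Subgroup G, G'.Normal ∧ G'.FiniteIndex ∧ ⁅G', H⁆ ≤ K :=
  exists_finiteIndex_normal_commutator_le_general H H' K M h hfin hnorm hgen hH'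
end

section
/- Let V be a finite-dimensional vector space of dimension n over a field, and let G ≤ GL(V) be a subgroup all of whose elements are unipotent. Then for any elements g₁, …, g_m, h₁, …, h_m ∈ G with m ≥ n, the composition h₁(Id − g₁) ⋯ h_m(Id − g_m) is the zero endomorphism of V. -/
/-!
Over an algebraically closed field `k`, let `S` be a multiplicatively closed set of unipotent
elements spanning the algebra `A` that acts on `V`. On a simple subquotient `M` of `V`, Burnside's
theorem (Jacobson density together with Schur's lemma) makes `A → End k M` surjective, and
`tr ((s - 1) t) = tr (s t) - tr t = 0` for `s, t ∈ S`; nondegeneracy of the trace form then forces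
`S` to act trivially on `M` (Kolchin). Consequently the series `F₀ = 0`,
`Fᵢ₊₁ = {v | s • v - v ∈ Fᵢ for all s ∈ S}` grows strictly until it exhausts `V`, so `F_n = V`
for `n = dim V`, while each `t (1 - s)` maps `Fᵢ₊₁` into `Fᵢ`. The general field is reduced to
its algebraic closure by base change, which is injective on endomorphisms.
-/

open Module LinearMap
open scoped TensorProduct

theorem List.prod_smul_mem_of_forall_smul_mem {M V : Type*} [Monoid M] [MulAction M V]
    {F : ℕ → Set V} {l : List M} (hl : ∀ x ∈ l, ∀ i, ∀ v ∈ F (i + 1), x • v ∈ F i) {i : ℕ}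
    {v : V} (hv : v ∈ F (i + l.length)) : l.prod • v ∈ F i := by
  induction l generalizing i with
  | nil => simpa using hv
  | cons x l ih =>
    rw [List.length_cons, ← Nat.add_assoc, Nat.add_right_comm] at hv
    rw [List.prod_cons, mul_smul]
    exact hl x List.mem_cons_self i _ (ih (fun y hy => hl y (List.mem_cons_of_mem x hy)) hv)

theorem Submodule.smul_mem_of_adjoin_eq_top {k A V : Type*} [CommSemiring k] [Semiring A]
    [Algebra k A] [AddCommMonoid V] [Module k V] [Module A V] [IsScalarTower k A V]
    {S : Set A} (hS : Algebra.adjoin k S = ⊤) {W : Submodule k V}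
    (hW : ∀ s ∈ S, ∀ v ∈ W, s • v ∈ W) (a : A) {v : V} (hv : v ∈ W) : a • v ∈ W := by
  have ha : a ∈ Algebra.adjoin k S := hS ▸ Algebra.mem_top
  induction ha using Algebra.adjoin_induction generalizing v with
  | mem s hs => exact hW s hs v hv
  | algebraMap c => simpa [algebraMap_smul] using W.smul_mem c hv
  | add a b _ _ ha hb => simpa [add_smul] using W.add_mem (ha hv) (hb hv)
  | mul a b _ _ ha hb => simpa [mul_smul] using ha (hb hv)

namespace LinearMap

variable {k M : Type*} [Field k] [AddCommGroup M] [Module k M] [FiniteDimensional k M]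

theorem eq_zero_of_forall_trace_mul_eq_zero (x : End k M) (h : ∀ f, trace k M (x * f) = 0) :
    x = 0 := by
  by_contra hx
  obtain ⟨v, hv⟩ : ∃ v, x v ≠ 0 := not_forall.mp fun h' => hx (LinearMap.ext h')
  obtain ⟨φ, hφ⟩ : ∃ φ : Dual k M, φ (x v) ≠ 0 := by
    simpa using (Module.forall_dual_apply_eq_zero_iff k (x v)).not.mpr hv
  have hcomp : x * φ.smulRight v = φ.smulRight (x v) := by ext; simp
  exact hφ (by simpa [hcomp, trace_smulRight] using h (φ.smulRight v))

theorem trace_eq_finrank_of_isNilpotent_sub_one {u : End k M} (hu : IsNilpotent (u - 1)) :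
    trace k M u = finrank k M := by
  rw [← trace_one, ← sub_eq_zero, ← map_sub, (isNilpotent_trace_of_isNilpotent hu).eq_zero]

end LinearMap

namespace IsSimpleModule

variable {k A M : Type*} [Field k] [IsAlgClosed k] [Ring A] [Algebra k A] [AddCommGroup M]
  [Module k M] [Module A M] [IsScalarTower k A M] [FiniteDimensional k M] [IsSimpleModule A M]

theorem lsmul_surjective_of_isAlgClosed :
    Function.Surjective (Algebra.lsmul k k M : A →ₐ[k] End k M) := by
  have hscalar := (algebraMap_end_bijective_of_isAlgClosed (A := A) (V := M) k).2
  have : Module.Finite (End A M) M := Module.Finite.of_restrictScalars_finite k _ _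
  intro f
  let f' : End (End A M) M :=
    { toFun := f
      map_add' := f.map_add
      map_smul' := fun φ v => by
        obtain ⟨c, rfl⟩ := hscalar φ
        simp }
  obtain ⟨a, ha⟩ := Module.Finite.toModuleEnd_moduleEnd_surjective f'
  exact ⟨a, LinearMap.ext fun v => congr($ha v)⟩

theorem smul_eq_self_of_isNilpotent_sub_one {S : Submonoid A}
    (hS : Algebra.adjoin k (S : Set A) = ⊤) (hnil : ∀ s ∈ S, IsNilpotent (s - 1))
    {s : A} (hs : s ∈ S) (v : M) : s • v = v := by
  let ρ : A →ₐ[k] End k M := Algebra.lsmul k k M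
  have hspan : Submodule.span k (S : Set A) = ⊤ := by
    rw [← Submonoid.closure_eq S, ← Algebra.adjoin_eq_span, hS, Algebra.top_toSubmodule]
  have htrace : ∀ t ∈ S, trace k M (ρ t) = finrank k M := fun t ht =>
    trace_eq_finrank_of_isNilpotent_sub_one <| by simpa using (hnil t ht).map ρ
  have hvanish : (trace k M).comp ((mulLeft k (ρ s - 1)).comp ρ.toLinearMap) = 0 :=
    ext_on hspan fun t ht => by
      simp [sub_mul, ← map_mul, htrace t ht, htrace _ (S.mul_mem hs ht)]
  have hρs : ρ s - 1 = 0 := eq_zero_of_forall_trace_mul_eq_zero _ fun f => by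
    obtain ⟨a, rfl⟩ := lsmul_surjective_of_isAlgClosed (A := A) f
    exact LinearMap.congr_fun hvanish a
  simpa [sub_eq_zero, ρ] using congr($hρs v)

end IsSimpleModule

section FixedSeries

variable (k : Type*) {A : Type*} (V : Type*) [CommRing k] [Ring A] [Algebra k A]
  [AddCommGroup V] [Module k V] [Module A V] [IsScalarTower k A V] (S : Submonoid A)

def fixedSeries : ℕ → Submodule k V
  | 0 => ⊥
  | i + 1 => ⨅ s ∈ S, (fixedSeries i).comap (DistribSMul.toLinearMap k V s - LinearMap.id)

@[simp]
theorem fixedSeries_zero : fixedSeries k V S 0 = ⊥ := rfl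

variable {k V S}

theorem mem_fixedSeries_succ {i : ℕ} {v : V} :
    v ∈ fixedSeries k V S (i + 1) ↔ ∀ s ∈ S, s • v - v ∈ fixedSeries k V S i := by
  simp [fixedSeries]

theorem smul_mem_fixedSeries {s : A} (hs : s ∈ S) {i : ℕ} {v : V}
    (hv : v ∈ fixedSeries k V S i) : s • v ∈ fixedSeries k V S i := by
  induction i generalizing v with
  | zero => simp_all
  | succ i ih =>
    rw [mem_fixedSeries_succ] at hv ⊢
    intro t ht
    have hts : t • s • v - s • v = ((t * s) • v - v) - (s • v - v) := by
      rw [mul_smul]; abel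
    rw [hts]
    exact sub_mem (hv _ (S.mul_mem ht hs)) (hv s hs)

theorem fixedSeries_mono : Monotone (fixedSeries k V S) := by
  refine monotone_nat_of_le_succ fun i => ?_
  induction i with
  | zero => simp
  | succ i ih =>
    intro v hv
    rw [mem_fixedSeries_succ] at hv ⊢
    exact fun s hs => ih (hv s hs)

theorem mul_one_sub_smul_mem_fixedSeries {s t : A} (hs : s ∈ S) (ht : t ∈ S) {i : ℕ} {v : V}
    (hv : v ∈ fixedSeries k V S (i + 1)) : (t * (1 - s)) • v ∈ fixedSeries k V S i := by
  rw [mul_smul, sub_smul, one_smul, ← neg_sub, smul_neg]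
  exact neg_mem (smul_mem_fixedSeries ht (mem_fixedSeries_succ.1 hv s hs))

end FixedSeries

section Kolchin

variable {k A V : Type*} [Field k] [IsAlgClosed k] [Ring A] [Algebra k A] [AddCommGroup V]
  [Module k V] [Module A V] [IsScalarTower k A V] [FiniteDimensional k V] {S : Submonoid A}
  (hS : Algebra.adjoin k (S : Set A) = ⊤) (hnil : ∀ s ∈ S, IsNilpotent (s - 1))
include hS hnil

theorem fixedSeries_lt_succ {i : ℕ} (hi : fixedSeries k V S i ≠ ⊤) :
    fixedSeries k V S i < fixedSeries k V S (i + 1) := by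
  set W := fixedSeries k V S i
  let WA : Submodule A V :=
    { W with smul_mem' := fun a v hv =>
        W.smul_mem_of_adjoin_eq_top hS (fun s hs _ => smul_mem_fixedSeries hs) a hv }
  have hWA : WA.restrictScalars k = W := rfl
  have : IsArtinian A V := isArtinian_of_tower k inferInstance
  obtain ⟨W', hcov⟩ := exists_covBy_of_wellFoundedLT (a := WA) <|
    not_isMax_iff_ne_top.mpr fun h => hi (by rw [← hWA, h, Submodule.restrictScalars_top])
  have : IsSimpleModule A (W' ⧸ WA.comap W'.subtype) := (covBy_iff_quot_is_simple hcov.le).mp hcov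
  have : FiniteDimensional k W' := .of_injective (W'.subtype.restrictScalars k) W'.injective_subtype
  have hW' : W'.restrictScalars k ≤ fixedSeries k V S (i + 1) := fun v hv =>
    mem_fixedSeries_succ.2 fun s hs => by
      have h := IsSimpleModule.smul_eq_self_of_isNilpotent_sub_one hS hnil hs
        (Submodule.Quotient.mk ⟨v, hv⟩ : W' ⧸ WA.comap W'.subtype)
      rwa [← Submodule.Quotient.mk_smul, Submodule.Quotient.eq] at h
  exact lt_of_lt_of_le (hWA ▸ (Submodule.restrictScalarsEmbedding k A V).strictMono hcov.lt) hW'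

theorem fixedSeries_finrank_eq_top : fixedSeries k V S (finrank k V) = ⊤ := by
  have hdim : ∀ i, min i (finrank k V) ≤ finrank k (fixedSeries k V S i) := by
    intro i
    induction i with
    | zero => simp
    | succ i ih =>
      by_cases hi : fixedSeries k V S i = ⊤
      · have htop : fixedSeries k V S (i + 1) = ⊤ :=
          top_le_iff.mp (hi ▸ fixedSeries_mono i.le_succ)
        rw [htop, finrank_top]
        omega
      · have := Submodule.finrank_lt_finrank_of_lt (fixedSeries_lt_succ hS hnil hi)
        omega
  exact Submodule.eq_top_of_finrank_eq
    ((Submodule.finrank_le _).antisymm (by simpa using hdim (finrank k V)))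

theorem list_prod_mul_one_sub_smul_eq_zero {m : ℕ} (hm : finrank k V ≤ m) (s t : Fin m → S)
    (v : V) : (List.ofFn fun i => (t i : A) * (1 - s i)).prod • v = 0 := by
  have hv : v ∈ fixedSeries k V S m :=
    fixedSeries_mono hm (fixedSeries_finrank_eq_top (V := V) hS hnil ▸ Submodule.mem_top)
  have hl : ∀ x ∈ List.ofFn (fun i => (t i : A) * (1 - s i)), ∀ i,
      ∀ v ∈ (fixedSeries k V S (i + 1) : Set V), x • v ∈ (fixedSeries k V S i : Set V) := by
    simp only [List.mem_ofFn, forall_exists_index, forall_apply_eq_imp_iff]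
    exact fun j i v hv => mul_one_sub_smul_mem_fixedSeries (s j).2 (t j).2 hv
  simpa using List.prod_smul_mem_of_forall_smul_mem
    (F := fun i => (fixedSeries k V S i : Set V)) (i := 0) hl (by simpa using hv)

end Kolchin

theorem Submonoid.list_prod_mul_one_sub_eq_zero_of_isAlgClosed {k V : Type*} [Field k]
    [IsAlgClosed k] [AddCommGroup V] [Module k V] [FiniteDimensional k V]
    (T : Submonoid (End k V)) (hT : ∀ u ∈ T, IsNilpotent (u - 1)) {m : ℕ}
    (hm : finrank k V ≤ m) (s t : Fin m → T) :
    (List.ofFn fun i => (t i : End k V) * (1 - s i)).prod = 0 := by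
  let A := Algebra.adjoin k (T : Set (End k V))
  let S : Submonoid A := T.comap A.val
  have hS : Algebra.adjoin k (S : Set A) = ⊤ := Algebra.adjoin_adjoin_coe_preimage
  have hnil : ∀ a ∈ S, IsNilpotent (a - 1) := fun a ha =>
    (IsNilpotent.map_iff (f := A.val) Subtype.val_injective).mp (by simpa using hT _ ha)
  let lift : T → S := fun u => ⟨⟨u, Algebra.subset_adjoin u.2⟩, u.2⟩
  ext v
  simpa [Subalgebra.smul_def, map_list_prod, List.map_ofFn, Function.comp_def] using
    list_prod_mul_one_sub_smul_eq_zero hS hnil hm (lift ∘ s) (lift ∘ t) v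

/-- Let `V` be an `n`-dimensional vector space and `G ≤ GL(V)` a subgroup all of whose
elements are unipotent.  For any `g₁,…,g_m, h₁,…,h_m ∈ G` with `m ≥ n`, the composition
`h₁(Id − g₁) ⋯ h_m(Id − g_m)` is zero. -/
theorem unipotent_long_product_eq_zero
    {K V : Type*} [Field K] [AddCommGroup V] [Module K V] [FiniteDimensional K V]
    (n : ℕ) (hn : Module.finrank K V = n)
    (G : Subgroup (Module.End K V)ˣ)
    (hG : ∀ u ∈ G, ((u : Module.End K V) - 1) ^ n = 0)
    (m : ℕ) (hm : n ≤ m) (gs hs : Fin m → G) :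
    (List.ofFn fun i => ((hs i : (Module.End K V)ˣ) : Module.End K V) *
        (1 - ((gs i : (Module.End K V)ˣ) : Module.End K V))).prod = 0 := by
  let L := AlgebraicClosure K
  let φ : End K V →ₐ[K] End L (L ⊗[K] V) := End.baseChangeHom K L V
  let T : Submonoid (End L (L ⊗[K] V)) := (G.toSubmonoid.map (Units.coeHom _)).map φ
  have hT : ∀ u ∈ T, IsNilpotent (u - 1) := by
    rintro _ ⟨_, ⟨g, hg, rfl⟩, rfl⟩
    exact ⟨n, by rw [Units.coeHom_apply, ← map_one φ, ← map_sub φ, ← map_pow φ, hG g hg, map_zero]⟩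
  let ι : G → T := fun g => ⟨φ (g : (End K V)ˣ), Submonoid.mem_map_of_mem φ ⟨g, g.2, rfl⟩⟩
  have hm' : finrank L (L ⊗[K] V) ≤ m := by rwa [finrank_baseChange, hn]
  have hφ : Function.Injective φ := LinearMap.baseChangeHom_injective K V L
  apply hφ
  rw [map_list_prod, List.map_ofFn, map_zero]
  simpa only [Function.comp_def, map_mul, map_sub, map_one] using
    T.list_prod_mul_one_sub_eq_zero_of_isAlgClosed hT hm' (ι ∘ gs) (ι ∘ hs)
end

section
/- Let U be a group of strictly upper-triangular unipotent n × n matrices over ℤ acting linearly on ℤⁿ, let T' ⊆ T be U-stable subgroups with T abelian, and consider the semidirect product G = U ⋉ T' with U acting on T' via the linear action. If for every g₁,…,g_k, h₁,…,h_k ∈ U with k ≥ d the composite endomorphism h₁(Id − g₁)⋯h_k(Id − g_k) annihilates T', and Γ_{n−1}U = 1, then Γ_{max(n−1, d)}G = 1. -/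
/-- The action of `U` on a `U`-stable additive subgroup `T' ≤ T`, as multiplicative
automorphisms of `Multiplicative T'`. -/
def AddSubgroup.stableMulAut {U T : Type*} [Group U] [AddCommGroup T]
    [DistribMulAction U T] (T' : AddSubgroup T)
    (hst : ∀ (u : U), ∀ t ∈ T', u • t ∈ T') :
    U →* MulAut (Multiplicative T') where
  toFun u := AddEquiv.toMultiplicative
    { toFun := fun t => ⟨u • (t : T), hst u t t.2⟩
      invFun := fun t => ⟨u⁻¹ • (t : T), hst u⁻¹ t t.2⟩
      left_inv := fun t => by ext; simp
      right_inv := fun t => by ext; simp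
      map_add' := fun a b => by ext; simp }
  map_one' := by ext t; simp [AddEquiv.toMultiplicative]
  map_mul' u v := by ext t; simp [AddEquiv.toMultiplicative, mul_smul]

/-!
Let `J ⊆ End T` be the additive span of the operators `1 - u` (`u ∈ U`), the image of the
augmentation ideal of `ℤ[U]`. Since `1 - [a, b] = ((1 - b)(1 - a) - (1 - a)(1 - b)) a⁻¹ b⁻¹` and `J`
is stable under multiplication by `U` on both sides, `1 - u ∈ J^(k+1)` for `u ∈ Γ_k U`. The
commutator formula in `T' ⋊ U` writes the `T'`-coordinate of `[(t, u), (t', u')]` as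
`(1 - uu'u⁻¹) t + u (1 - u'u⁻¹u'⁻¹) t'`, so by induction the `T'`-coordinates of `Γ_k (T' ⋊ U)` lie
in `J^k T'`. For `k ≥ d` the hypothesis gives `J^k T' = 0`, and for `k ≥ n - 1` the `U`-coordinate
of `Γ_k (T' ⋊ U)` lies in `Γ_{n-1} U = 1`.
-/

open Submodule
open scoped commutatorElement

namespace MonoidHom

variable {U R : Type*} [Group U] [Ring R] (ρ : U →* R)

/-- The image under `ρ` of the augmentation ideal of `ℤ[U]`. -/
def augmentationSpan : Submodule ℤ R :=
  span ℤ (Set.range fun g => 1 - ρ g)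

variable {ρ}

theorem one_sub_mem_augmentationSpan (g : U) : 1 - ρ g ∈ ρ.augmentationSpan :=
  subset_span ⟨g, rfl⟩

theorem mul_mem_augmentationSpan (u : U) {x : R} (hx : x ∈ ρ.augmentationSpan) :
    ρ u * x ∈ ρ.augmentationSpan := by
  induction hx using span_induction with
  | mem x hx =>
    obtain ⟨g, rfl⟩ := hx
    have : ρ u * (1 - ρ g) = (1 - ρ (u * g)) - (1 - ρ u) := by rw [map_mul]; noncomm_ring
    rw [this]
    exact sub_mem (one_sub_mem_augmentationSpan _) (one_sub_mem_augmentationSpan _)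
  | zero => simp
  | add x y _ _ hx hy => rw [mul_add]; exact add_mem hx hy
  | smul n x _ hx => rw [mul_smul_comm]; exact Submodule.smul_mem _ n hx

theorem mem_augmentationSpan_mul (u : U) {x : R} (hx : x ∈ ρ.augmentationSpan) :
    x * ρ u ∈ ρ.augmentationSpan := by
  induction hx using span_induction with
  | mem x hx =>
    obtain ⟨g, rfl⟩ := hx
    have : (1 - ρ g) * ρ u = (1 - ρ (g * u)) - (1 - ρ u) := by rw [map_mul]; noncomm_ring
    rw [this]
    exact sub_mem (one_sub_mem_augmentationSpan _) (one_sub_mem_augmentationSpan _)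
  | zero => simp
  | add x y _ _ hx hy => rw [add_mul]; exact add_mem hx hy
  | smul n x _ hx => rw [smul_mul_assoc]; exact Submodule.smul_mem _ n hx

theorem mul_mem_augmentationSpan_pow_succ (u : U) {k : ℕ} {x : R}
    (hx : x ∈ ρ.augmentationSpan ^ (k + 1)) : ρ u * x ∈ ρ.augmentationSpan ^ (k + 1) := by
  rw [pow_succ'] at hx ⊢
  refine Submodule.mul_induction_on hx (fun a ha b hb ↦ ?_) (fun x y hx hy ↦ ?_)
  · rw [← mul_assoc]; exact mul_mem_mul (mul_mem_augmentationSpan u ha) hb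
  · rw [mul_add]; exact add_mem hx hy

theorem mem_augmentationSpan_pow_succ_mul (u : U) {k : ℕ} {x : R}
    (hx : x ∈ ρ.augmentationSpan ^ (k + 1)) : x * ρ u ∈ ρ.augmentationSpan ^ (k + 1) := by
  rw [pow_succ] at hx ⊢
  refine Submodule.mul_induction_on hx (fun a ha b hb ↦ ?_) (fun x y hx hy ↦ ?_)
  · rw [mul_assoc]; exact mul_mem_mul ha (mem_augmentationSpan_mul u hb)
  · rw [add_mul]; exact add_mem hx hy

variable (ρ) in
/-- Indexed like `Subgroup.lowerCentralSeries`: `ρ.dimensionSubgroup 0 = ⊤`. -/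
def dimensionSubgroup (k : ℕ) : Subgroup U where
  carrier := {u | 1 - ρ u ∈ ρ.augmentationSpan ^ (k + 1)}
  one_mem' := by simp
  mul_mem' {x y} hx hy := by
    have : 1 - ρ (x * y) = (1 - ρ x) + ρ x * (1 - ρ y) := by rw [map_mul]; noncomm_ring
    rw [Set.mem_ofPred_eq, this]
    exact add_mem hx (mul_mem_augmentationSpan_pow_succ x hy)
  inv_mem' {x} hx := by
    have : 1 - ρ x⁻¹ = -(ρ x⁻¹ * (1 - ρ x)) := by
      rw [mul_sub, ← map_mul, inv_mul_cancel, map_one]; noncomm_ring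
    rw [Set.mem_ofPred_eq, this]
    exact neg_mem (mul_mem_augmentationSpan_pow_succ _ hx)

theorem mem_dimensionSubgroup {k : ℕ} {u : U} :
    u ∈ ρ.dimensionSubgroup k ↔ 1 - ρ u ∈ ρ.augmentationSpan ^ (k + 1) :=
  Iff.rfl

theorem one_sub_commutatorElement (a b : U) :
    1 - ρ ⁅a, b⁆ = ((1 - ρ b) * (1 - ρ a) - (1 - ρ a) * (1 - ρ b)) * ρ a⁻¹ * ρ b⁻¹ := by
  have ha : ρ a * ρ a⁻¹ = 1 := by rw [← map_mul, mul_inv_cancel, map_one]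
  have hb : ρ b * ρ b⁻¹ = 1 := by rw [← map_mul, mul_inv_cancel, map_one]
  have hdiff : (1 - ρ b) * (1 - ρ a) - (1 - ρ a) * (1 - ρ b) = ρ b * ρ a - ρ a * ρ b := by
    noncomm_ring
  rw [hdiff, sub_mul, sub_mul, mul_assoc (ρ b), ha, mul_one, hb, commutatorElement_def,
    map_mul, map_mul, map_mul]

theorem lowerCentralSeries_le_dimensionSubgroup (k : ℕ) :
    (⊤ : Subgroup U).lowerCentralSeries k ≤ ρ.dimensionSubgroup k := by
  induction k with
  | zero =>
    intro u _
    rw [mem_dimensionSubgroup, zero_add, pow_one]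
    exact one_sub_mem_augmentationSpan u
  | succ k ih =>
    rw [Subgroup.lowerCentralSeries_succ, Subgroup.commutator_le]
    intro a ha b _
    have hab : (1 - ρ a) * (1 - ρ b) ∈ ρ.augmentationSpan ^ (k + 2) :=
      pow_succ ρ.augmentationSpan (k + 1) ▸ mul_mem_mul (ih ha) (one_sub_mem_augmentationSpan b)
    have hba : (1 - ρ b) * (1 - ρ a) ∈ ρ.augmentationSpan ^ (k + 2) :=
      pow_succ' ρ.augmentationSpan (k + 1) ▸ mul_mem_mul (one_sub_mem_augmentationSpan b) (ih ha)
    rw [mem_dimensionSubgroup, one_sub_commutatorElement]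
    exact mem_augmentationSpan_pow_succ_mul _ (mem_augmentationSpan_pow_succ_mul _ (sub_mem hba hab))

theorem augmentationSpan_pow_smul_eq_bot {M : Type*} [AddCommGroup M] [Module R M] {k : ℕ}
    {N : Submodule ℤ M}
    (h : ∀ gs : Fin k → U, ∀ b ∈ N, (List.ofFn fun i ↦ 1 - ρ (gs i)).prod • b = 0) :
    ρ.augmentationSpan ^ k • N = ⊥ := by
  rw [eq_bot_iff, smul_le]
  intro f hf b hb
  rw [augmentationSpan, span_pow] at hf
  induction hf using span_induction with
  | mem f hf =>
    obtain ⟨fs, rfl⟩ := Set.mem_pow.1 hf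
    choose gs hgs using fun i ↦ (fs i).2
    simpa only [hgs, mem_bot] using h gs b hb
  | zero => simp
  | add f f' _ _ hf hf' => rw [add_smul]; exact add_mem hf hf'
  | smul n f _ hf => rw [smul_assoc]; exact Submodule.smul_mem _ n hf

end MonoidHom

theorem SemidirectProduct.right_mem_lowerCentralSeries {N G : Type*} [Group N] [Group G]
    {φ : G →* MulAut N} {k : ℕ} {g : N ⋊[φ] G}
    (hg : g ∈ (⊤ : Subgroup (N ⋊[φ] G)).lowerCentralSeries k) :
    g.right ∈ (⊤ : Subgroup G).lowerCentralSeries k := by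
  have hmap : g.right ∈ ((⊤ : Subgroup (N ⋊[φ] G)).map rightHom).lowerCentralSeries k := by
    rw [← Subgroup.map_lowerCentralSeries]
    exact ⟨g, hg, rfl⟩
  exact Subgroup.lowerCentralSeries_mono k le_top hmap

section Semidirect

variable {U T : Type*} [Group U] [AddCommGroup T] [DistribMulAction U T]

local notation "ρ" => DistribMulAction.toAddMonoidEnd U T

theorem smul_mem_augmentationSpan_pow_smul {N : Submodule ℤ T}
    (hN : ∀ u : U, ∀ t ∈ N, u • t ∈ N) (u : U) {k : ℕ} {t : T}
    (ht : t ∈ (ρ).augmentationSpan ^ k • N) : u • t ∈ (ρ).augmentationSpan ^ k • N := by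
  cases k with
  | zero =>
    rw [pow_zero, Submodule.one_smul] at ht ⊢
    exact hN u t ht
  | succ k =>
    refine smul_induction_on ht (fun f hf b hb ↦ ?_) (fun x y hx hy ↦ ?_)
    · rw [show u • f • b = (ρ u * f) • b from rfl]
      exact smul_mem_smul ((ρ).mul_mem_augmentationSpan_pow_succ u hf) hb
    · rw [smul_add]; exact add_mem hx hy

variable {T' : AddSubgroup T} {hst : ∀ (u : U), ∀ t ∈ T', u • t ∈ T'}

def leftCoord (g : Multiplicative T' ⋊[T'.stableMulAut hst] U) : T :=
  ((Multiplicative.toAdd g.left : T') : T)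

theorem leftCoord_mul (g h : Multiplicative T' ⋊[T'.stableMulAut hst] U) :
    leftCoord (g * h) = leftCoord g + g.right • leftCoord h :=
  rfl

theorem leftCoord_inv (g : Multiplicative T' ⋊[T'.stableMulAut hst] U) :
    leftCoord g⁻¹ = -(g.right⁻¹ • leftCoord g) := by
  rw [← smul_neg]; rfl

theorem leftCoord_commutatorElement (a b : Multiplicative T' ⋊[T'.stableMulAut hst] U) :
    leftCoord ⁅a, b⁆ = (1 - ρ (a.right * b.right * a.right⁻¹)) • leftCoord a +
      (ρ a.right * (1 - ρ (b.right * a.right⁻¹ * b.right⁻¹))) • leftCoord b := by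
  have hρ (u : U) (t : T) : ρ u • t = u • t := rfl
  simp only [commutatorElement_def, leftCoord_mul, leftCoord_inv, SemidirectProduct.mul_right,
    SemidirectProduct.inv_right, map_mul, sub_smul, one_smul, mul_sub, mul_one, mul_smul]
  simp only [hρ, smul_neg]
  abel

variable (hst) in
def leftCoordSubgroup (N : Submodule ℤ T) (hN : ∀ u : U, ∀ t ∈ N, u • t ∈ N) :
    Subgroup (Multiplicative T' ⋊[T'.stableMulAut hst] U) where
  carrier := {g | leftCoord g ∈ N}
  one_mem' := zero_mem N
  mul_mem' {g h} hg hh := by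
    rw [Set.mem_ofPred_eq, leftCoord_mul]
    exact add_mem hg (hN _ _ hh)
  inv_mem' {g} hg := by
    rw [Set.mem_ofPred_eq, leftCoord_inv]
    exact neg_mem (hN _ _ hg)

theorem mem_leftCoordSubgroup {N : Submodule ℤ T} {hN : ∀ u : U, ∀ t ∈ N, u • t ∈ N}
    {g : Multiplicative T' ⋊[T'.stableMulAut hst] U} :
    g ∈ leftCoordSubgroup hst N hN ↔ leftCoord g ∈ N :=
  Iff.rfl

theorem leftCoord_mem_of_mem_lowerCentralSeries {k : ℕ}
    {g : Multiplicative T' ⋊[T'.stableMulAut hst] U}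
    (hg : g ∈ (⊤ : Subgroup (Multiplicative T' ⋊[T'.stableMulAut hst] U)).lowerCentralSeries k) :
    leftCoord g ∈ (ρ).augmentationSpan ^ k • T'.toIntSubmodule := by
  have hT' : ∀ u : U, ∀ t ∈ (T'.toIntSubmodule : Submodule ℤ T), u • t ∈ T'.toIntSubmodule := hst
  induction k generalizing g with
  | zero =>
    rw [pow_zero, Submodule.one_smul]
    exact (Multiplicative.toAdd g.left).2
  | succ k ih =>
    suffices h : (⊤ : Subgroup _).lowerCentralSeries (k + 1) ≤ leftCoordSubgroup hst _
        (fun u _ ↦ smul_mem_augmentationSpan_pow_smul hT' u) from h hg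
    rw [Subgroup.lowerCentralSeries_succ, Subgroup.commutator_le]
    intro a ha b _
    have hu := SemidirectProduct.right_mem_lowerCentralSeries ha
    have hconj : b.right * a.right⁻¹ * b.right⁻¹ ∈ (ρ).dimensionSubgroup k :=
      (ρ).lowerCentralSeries_le_dimensionSubgroup k
        ((Subgroup.lowerCentralSeries_normal ⊤ k).conj_mem _ (inv_mem hu) _)
    have hJ : (ρ).augmentationSpan ^ (k + 1) • T'.toIntSubmodule =
        (ρ).augmentationSpan • (ρ).augmentationSpan ^ k • T'.toIntSubmodule := by
      rw [pow_succ']; exact Submodule.smul_assoc _ _ _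
    rw [mem_leftCoordSubgroup, leftCoord_commutatorElement]
    refine add_mem ?_ (smul_mem_smul ((ρ).mul_mem_augmentationSpan_pow_succ _ hconj) ?_)
    · rw [hJ]
      exact smul_mem_smul ((ρ).one_sub_mem_augmentationSpan _) (ih ha)
    · exact (Multiplicative.toAdd b.left).2

end Semidirect

theorem semidirect_lowerCentralSeries_eq_bot_general
    (n d : ℕ) (U : Subgroup (Matrix (Fin n) (Fin n) ℤ)ˣ)
    {T : Type*} [AddCommGroup T] [DistribMulAction U T]
    (T' : AddSubgroup T) (hst : ∀ (u : U), ∀ t ∈ T', u • t ∈ T')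
    (hann : ∀ k : ℕ, d ≤ k → ∀ gs hs : Fin k → U, ∀ b ∈ T',
      (List.ofFn fun i =>
        DistribMulAction.toAddMonoidEnd U T (hs i) *
          (1 - DistribMulAction.toAddMonoidEnd U T (gs i))).prod b = 0)
    (hU : (⊤ : Subgroup U).lowerCentralSeries (n - 1) = ⊥) :
    (⊤ : Subgroup (Multiplicative T' ⋊[T'.stableMulAut hst] U)).lowerCentralSeries (max (n - 1) d) = ⊥ := by
  refine eq_bot_iff.2 fun g hg ↦ ?_
  have hright : g.right = 1 := by
    have := Subgroup.lowerCentralSeries_antitone ⊤ (le_max_left _ d)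
      (SemidirectProduct.right_mem_lowerCentralSeries hg)
    rwa [hU, Subgroup.mem_bot] at this
  have hleft : leftCoord g = 0 := by
    have hvanish := (DistribMulAction.toAddMonoidEnd U T).augmentationSpan_pow_smul_eq_bot
      (k := max (n - 1) d) (N := T'.toIntSubmodule) fun gs b hb ↦ by
        simpa only [Pi.one_apply, map_one, one_mul, AddMonoid.End.smul_def] using
          hann _ (le_max_right _ d) gs 1 b hb
    simpa only [hvanish, mem_bot] using leftCoord_mem_of_mem_lowerCentralSeries hg
  exact SemidirectProduct.ext (Subtype.ext hleft) hright

/-- Let `U` be a group of strictly upper-triangular unipotent `n × n` integer matrices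
acting linearly on `ℤⁿ`, let `T' ⊆ T` be `U`-stable subgroups with `T` abelian, and let
`G = U ⋉ T'`.  If every product `h₁(Id − g₁) ⋯ h_k(Id − g_k)` with `k ≥ d` annihilates
`T'` and `Γ_{n−1} U = 1`, then `Γ_{max(n−1, d)} G = 1`. -/
theorem semidirect_lowerCentralSeries_eq_bot
    (n d : ℕ) (U : Subgroup (Matrix (Fin n) (Fin n) ℤ)ˣ)
    (hupper : ∀ u ∈ U, ∀ i j : Fin n, j ≤ i →
      ((u : (Matrix (Fin n) (Fin n) ℤ)ˣ) : Matrix (Fin n) (Fin n) ℤ) i j =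
        if i = j then 1 else 0)
    {T : Type*} [AddCommGroup T] [DistribMulAction U T]
    (T' : AddSubgroup T) (hst : ∀ (u : U), ∀ t ∈ T', u • t ∈ T')
    (hann : ∀ k : ℕ, d ≤ k → ∀ gs hs : Fin k → U, ∀ b ∈ T',
      (List.ofFn fun i =>
        DistribMulAction.toAddMonoidEnd U T (hs i) *
          (1 - DistribMulAction.toAddMonoidEnd U T (gs i))).prod b = 0)
    (hU : (⊤ : Subgroup U).lowerCentralSeries (n - 1) = ⊥) :
    (⊤ : Subgroup (Multiplicative T' ⋊[T'.stableMulAut hst] U)).lowerCentralSeries (max (n - 1) d) = ⊥ :=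
  semidirect_lowerCentralSeries_eq_bot_general n d U T' hst hann hU
end

section
/- Let T be an abelian group, U a group acting on T by automorphisms, and G = U ⋉ T the semidirect product. For every integer l ≥ 0 and every element (u, b) ∈ Γ_l G, the element b ∈ T is a finite sum of elements of the form ± h₁(Id − g₁) ⋯ h_k(Id − g_k)·b' for some k ≥ l, b' ∈ T, and g₁, …, g_k, h₁, …, h_k ∈ U. -/
/-!
Write `ρ u` for `t ↦ u • t` and let `F_l ⊆ End T` be the additive subgroup spanned by the
products `ρ h₁ (1 - ρ g₁) ⋯ ρ h_k (1 - ρ g_k)` with `k ≥ l`, the image of the powers of the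
augmentation ideal of `ℤ[U]`. It is a multiplicative filtration with `ρ u ∈ F_0` and
`1 - ρ u ∈ F_1`; let `A_l ⊆ T` be spanned by the values of `F_l`. Induction on `l` shows that
every `(u, b) ∈ Γ_l G` has `b ∈ A_l` and `1 - ρ u ∈ F_{l+1}`, because a commutator
`⁅(u, a), (v, b)⁆` has `T`-component `(1 - ρ c) a - ρ c (1 - ρ u) (v⁻¹ • b)` with `c = u v u⁻¹`
and `U`-component `⁅u, v⁆` with
`1 - ρ ⁅u, v⁆ = ((1 - ρ v) (1 - ρ u) - (1 - ρ u) (1 - ρ v)) ρ u⁻¹ ρ v⁻¹`.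
-/

def DistribMulAction.toMulAutMultiplicative (U T : Type*) [Group U] [AddCommGroup T]
    [DistribMulAction U T] : U →* MulAut (Multiplicative T) where
  toFun u := AddEquiv.toMultiplicative (DistribMulAction.toAddAut U T u)
  map_one' := by ext t; simp [AddEquiv.toMultiplicative]
  map_mul' u v := by ext t; simp [AddEquiv.toMultiplicative, mul_smul]

open scoped commutatorElement

namespace AugmentationFiltration

section Ring

variable {U R : Type*} [Monoid U] [Ring R] (ρ : U →* R)

def augProd {k : ℕ} (gs hs : Fin k → U) : R :=
  (List.ofFn fun i => ρ (hs i) * (1 - ρ (gs i))).prod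

def augFiltration (l : ℕ) : AddSubgroup R :=
  AddSubgroup.closure {r | ∃ k, l ≤ k ∧ ∃ gs hs : Fin k → U, r = augProd ρ gs hs}

variable {ρ}

lemma augProd_append {k k' : ℕ} (gs hs : Fin k → U) (gs' hs' : Fin k' → U) :
    augProd ρ (Fin.append gs gs') (Fin.append hs hs') = augProd ρ gs hs * augProd ρ gs' hs' := by
  simp [augProd, List.ofFn_add, Fin.append_right]

lemma augProd_mem_augFiltration {l k : ℕ} (h : l ≤ k) (gs hs : Fin k → U) :
    augProd ρ gs hs ∈ augFiltration ρ l :=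
  AddSubgroup.subset_closure ⟨k, h, gs, hs, rfl⟩

lemma augFiltration_antitone : Antitone (augFiltration ρ) := fun _ _ h =>
  AddSubgroup.closure_mono fun _ ⟨k, hk, gs, hs, hr⟩ => ⟨k, h.trans hk, gs, hs, hr⟩

lemma one_mem_augFiltration_zero : (1 : R) ∈ augFiltration ρ 0 := by
  simpa [augProd] using augProd_mem_augFiltration (ρ := ρ) le_rfl ![] ![]

lemma one_sub_mem_augFiltration_one (g : U) : 1 - ρ g ∈ augFiltration ρ 1 := by
  simpa [augProd] using augProd_mem_augFiltration (ρ := ρ) le_rfl ![g] ![1]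

lemma map_mem_augFiltration_zero (g : U) : ρ g ∈ augFiltration ρ 0 := by
  simpa using sub_mem one_mem_augFiltration_zero
    (augFiltration_antitone (Nat.zero_le 1) (one_sub_mem_augFiltration_one (ρ := ρ) g))

lemma augProd_mul_mem_augFiltration {l m k : ℕ} (hk : l ≤ k) (gs hs : Fin k → U) {y : R}
    (hy : y ∈ augFiltration ρ m) : augProd ρ gs hs * y ∈ augFiltration ρ (l + m) := by
  refine (AddSubgroup.closure_le
    ((augFiltration ρ (l + m)).comap (AddMonoidHom.mulLeft (augProd ρ gs hs)))).2 ?_ hy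
  rintro _ ⟨k', hk', gs', hs', rfl⟩
  simpa [← augProd_append] using augProd_mem_augFiltration (add_le_add hk hk') _ _

lemma mul_mem_augFiltration {l m : ℕ} {x y : R} (hx : x ∈ augFiltration ρ l)
    (hy : y ∈ augFiltration ρ m) : x * y ∈ augFiltration ρ (l + m) := by
  refine (AddSubgroup.closure_le
    ((augFiltration ρ (l + m)).comap (AddMonoidHom.mulRight y))).2 ?_ hx
  rintro _ ⟨k, hk, gs, hs, rfl⟩
  exact augProd_mul_mem_augFiltration hk gs hs hy

lemma map_mul_mem_augFiltration (g : U) {m : ℕ} {y : R} (hy : y ∈ augFiltration ρ m) :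
    ρ g * y ∈ augFiltration ρ m := by
  simpa using mul_mem_augFiltration (map_mem_augFiltration_zero g) hy

lemma mul_map_mem_augFiltration (g : U) {l : ℕ} {x : R} (hx : x ∈ augFiltration ρ l) :
    x * ρ g ∈ augFiltration ρ l := by
  simpa using mul_mem_augFiltration hx (map_mem_augFiltration_zero g)

section Group

variable {G : Type*} [Group G] (ρ : G →* R)

def dimensionSubgroup (n : ℕ) : Subgroup G where
  carrier := {u | 1 - ρ u ∈ augFiltration ρ n}
  one_mem' := by simp
  mul_mem' {u v} hu hv := by
    have h : 1 - ρ (u * v) = (1 - ρ u) + ρ u * (1 - ρ v) := by rw [map_mul]; noncomm_ring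
    show 1 - ρ (u * v) ∈ augFiltration ρ n
    rw [h]
    exact add_mem hu (map_mul_mem_augFiltration u hv)
  inv_mem' {u} hu := by
    have h : 1 - ρ u⁻¹ = -(ρ u⁻¹ * (1 - ρ u)) := by
      rw [mul_sub, mul_one, ← map_mul, inv_mul_cancel, map_one, neg_sub]
    show 1 - ρ u⁻¹ ∈ augFiltration ρ n
    rw [h]
    exact neg_mem (map_mul_mem_augFiltration u⁻¹ hu)

lemma one_sub_map_commutatorElement (u v : G) :
    1 - ρ ⁅u, v⁆ = ((1 - ρ v) * (1 - ρ u) - (1 - ρ u) * (1 - ρ v)) * ρ u⁻¹ * ρ v⁻¹ := by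
  have hu : ρ u * ρ u⁻¹ = 1 := by rw [← map_mul, mul_inv_cancel, map_one]
  have hv : ρ v * ρ v⁻¹ = 1 := by rw [← map_mul, mul_inv_cancel, map_one]
  have hcomm : (1 - ρ v) * (1 - ρ u) - (1 - ρ u) * (1 - ρ v) = ρ v * ρ u - ρ u * ρ v := by
    noncomm_ring
  rw [hcomm, commutatorElement_def, map_mul, map_mul, map_mul, sub_mul, sub_mul,
    mul_assoc (ρ v) (ρ u) (ρ u⁻¹), hu, mul_one, hv]

variable {ρ}

lemma mem_dimensionSubgroup {n : ℕ} {u : G} :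
    u ∈ dimensionSubgroup ρ n ↔ 1 - ρ u ∈ augFiltration ρ n :=
  Iff.rfl

lemma commutatorElement_mem_dimensionSubgroup {n : ℕ} {u : G} (hu : u ∈ dimensionSubgroup ρ n)
    (v : G) : ⁅u, v⁆ ∈ dimensionSubgroup ρ (n + 1) := by
  rw [mem_dimensionSubgroup] at hu ⊢
  have hv := one_sub_mem_augFiltration_one (ρ := ρ) v
  have hvu : (1 - ρ v) * (1 - ρ u) ∈ augFiltration ρ (n + 1) :=
    add_comm 1 n ▸ mul_mem_augFiltration hv hu
  rw [one_sub_map_commutatorElement]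
  exact mul_map_mem_augFiltration _ <| mul_map_mem_augFiltration _ <|
    sub_mem hvu (mul_mem_augFiltration hu hv)

end Group

end Ring

section Module

variable (U T : Type*) [Monoid U] [AddCommGroup T] [DistribMulAction U T]

local notation "ρ" => DistribMulAction.toAddMonoidEnd U T

def augSubgroup (l : ℕ) : AddSubgroup T :=
  AddSubgroup.closure {t | ∃ k, l ≤ k ∧ ∃ gs hs : Fin k → U, ∃ b' : T, t = augProd ρ gs hs b'}

variable {U T}

lemma apply_mem_augSubgroup {l : ℕ} {x : AddMonoid.End T} (hx : x ∈ augFiltration ρ l)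
    (t : T) : x t ∈ augSubgroup U T l := by
  refine (AddSubgroup.closure_le
    ((augSubgroup U T l).comap (AddMonoidHom.eval t))).2 ?_ hx
  rintro _ ⟨k, hk, gs, hs, rfl⟩
  exact AddSubgroup.subset_closure ⟨k, hk, gs, hs, t, rfl⟩

lemma apply_mem_augSubgroup_add {l m : ℕ} {x : AddMonoid.End T} (hx : x ∈ augFiltration ρ l)
    {t : T} (ht : t ∈ augSubgroup U T m) : x t ∈ augSubgroup U T (l + m) := by
  refine (AddSubgroup.closure_le ((augSubgroup U T (l + m)).comap x)).2 ?_ ht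
  rintro _ ⟨k, hk, gs, hs, b', rfl⟩
  exact apply_mem_augSubgroup (mul_mem_augFiltration hx (augProd_mem_augFiltration hk gs hs)) b'

lemma mem_augSubgroup_zero (t : T) : t ∈ augSubgroup U T 0 := by
  simpa using apply_mem_augSubgroup one_mem_augFiltration_zero t

lemma smul_mem_augSubgroup (u : U) {m : ℕ} {t : T} (ht : t ∈ augSubgroup U T m) :
    u • t ∈ augSubgroup U T m :=
  zero_add m ▸ apply_mem_augSubgroup_add (map_mem_augFiltration_zero u) ht

end Module

section SemidirectProduct

variable {U T : Type*} [Group U] [AddCommGroup T] [DistribMulAction U T]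

local notation "ρ" => DistribMulAction.toAddMonoidEnd U T
local notation "G" => Multiplicative T ⋊[DistribMulAction.toMulAutMultiplicative U T] U

lemma toAdd_left_mul (x y : G) :
    (x * y).left.toAdd = x.left.toAdd + x.right • y.left.toAdd := rfl

lemma toAdd_left_inv (x : G) : x⁻¹.left.toAdd = x.right⁻¹ • -x.left.toAdd := rfl

lemma toAdd_left_commutatorElement (p q : G) :
    ⁅p, q⁆.left.toAdd = p.left.toAdd - (p.right * q.right * p.right⁻¹) • p.left.toAdd -
      (p.right * q.right * p.right⁻¹) •
        (q.right⁻¹ • q.left.toAdd - p.right • q.right⁻¹ • q.left.toAdd) := by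
  simp only [commutatorElement_def, toAdd_left_mul, toAdd_left_inv,
    SemidirectProduct.mul_right, SemidirectProduct.inv_right]
  simp [mul_smul, smul_sub]
  abel

variable (U T) in
def augLeftSubgroup (l : ℕ) : Subgroup G where
  carrier := {x | x.left.toAdd ∈ augSubgroup U T l}
  one_mem' := zero_mem (augSubgroup U T l)
  mul_mem' {x y} hx hy := by
    show (x * y).left.toAdd ∈ augSubgroup U T l
    rw [toAdd_left_mul]
    exact add_mem hx (smul_mem_augSubgroup x.right hy)
  inv_mem' {x} hx := by
    show x⁻¹.left.toAdd ∈ augSubgroup U T l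
    rw [toAdd_left_inv]
    exact smul_mem_augSubgroup x.right⁻¹ (neg_mem hx)

lemma lowerCentralSeries_le_augLeftSubgroup_inf (l : ℕ) :
    (⊤ : Subgroup G).lowerCentralSeries l ≤
      augLeftSubgroup U T l ⊓ (dimensionSubgroup ρ (l + 1)).comap SemidirectProduct.rightHom := by
  induction l with
  | zero =>
    intro x _
    exact ⟨mem_augSubgroup_zero _, one_sub_mem_augFiltration_one x.right⟩
  | succ l ih =>
    rw [Subgroup.lowerCentralSeries_succ, Subgroup.commutator_le]
    intro p hp q _
    obtain ⟨hpl, hpr⟩ := Subgroup.mem_inf.1 (ih hp)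
    rw [Subgroup.mem_comap] at hpr
    refine Subgroup.mem_inf.2 ⟨?_, ?_⟩
    · change ⁅p, q⁆.left.toAdd ∈ augSubgroup U T (l + 1)
      rw [toAdd_left_commutatorElement]
      refine sub_mem ?_ <|
        smul_mem_augSubgroup _ (apply_mem_augSubgroup (mem_dimensionSubgroup.1 hpr) _)
      exact add_comm 1 l ▸ apply_mem_augSubgroup_add (one_sub_mem_augFiltration_one _) hpl
    · rw [Subgroup.mem_comap, map_commutatorElement]
      exact commutatorElement_mem_dimensionSubgroup hpr _

end SemidirectProduct

end AugmentationFiltration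

/-- In the semidirect product `G = U ⋉ T`, for every `(u, b) ∈ Γ_l G`, the element `b ∈ T`
is a finite sum of elements `± h₁(Id − g₁) ⋯ h_k(Id − g_k)·b'` with `k ≥ l`, `b' ∈ T` and
`gᵢ, hᵢ ∈ U`. -/
theorem semidirect_lowerCentralSeries_left_mem_closure
    {U T : Type*} [Group U] [AddCommGroup T] [DistribMulAction U T]
    (l : ℕ)
    (x : Multiplicative T ⋊[DistribMulAction.toMulAutMultiplicative U T] U)
    (hx : x ∈ (⊤ : Subgroup
      (Multiplicative T ⋊[DistribMulAction.toMulAutMultiplicative U T] U)).lowerCentralSeries l) :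
    Multiplicative.toAdd x.left ∈
      AddSubgroup.closure
        {t : T | ∃ k : ℕ, l ≤ k ∧ ∃ gs hs : Fin k → U, ∃ b' : T,
          t = (List.ofFn fun i =>
            DistribMulAction.toAddMonoidEnd U T (hs i) *
              (1 - DistribMulAction.toAddMonoidEnd U T (gs i))).prod b'} :=
  (AugmentationFiltration.lowerCentralSeries_le_augLeftSubgroup_inf l hx).1
end
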